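/- Let p be a prime and m, l, r, s natural numbers with l ≥ 1, 1 ≤ r ≤ l and s ≤ r−1. Then, as real numbers, ⌈l/p^{m+1}⌉ − (l−s)/(p−1) + v_p(C(l,r)) + v_p(C(r−1,s)) + v_p((l−1−s)!) − v_p(⌊(l−1−s)/p^{m+2}⌋!) ≥ ((p²−p−1)·l)/(p^{m+2}(p−1)) − log_p(l+1) − 2. -/

import Mathlib

/-!
Write `n = l - 1 - s`. The binomial valuations are nonnegative and are dropped. By Legendre's
formula `(p - 1) v_p(n!) = n - S_p(n)`, where the base-`p` digit sum `S_p(n)` has at most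
`log_p n + 1` digits, each at most `p - 1`; and `(p - 1) v_p(⌊n/p^(m+2)⌋!) ≤ n / p^(m+2)`.
Since `n ≥ l - 1 - s` (also when the subtraction truncates), `n ≤ l` and `⌈l/p^(m+1)⌉ ≥ l/p^(m+1)`,
the valuation is at least `l/p^(m+1) - l/(p^(m+2)(p-1)) - log_p(l+1) - 2`, and
`l/p^(m+1) - l/(p^(m+2)(p-1)) = (p² - p - 1) l / (p^(m+2)(p-1))`.
-/

/-- `ν_m(k) = ⌈k / p^(m+1)⌉`, as in the appendix of the paper. -/
def nuCeil (p m k : ℕ) : ℕ := ⌈(k : ℚ) / (p : ℚ) ^ (m + 1)⌉₊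

open Nat

theorem Nat.digits_sum_le_sub_one_mul_log_add_one {b : ℕ} (hb : 1 < b) (n : ℕ) :
    (b.digits n).sum ≤ (b - 1) * (Nat.log b n + 1) := by
  have hlen : (b.digits n).length ≤ Nat.log b n + 1 :=
    (Nat.digits_length_le_iff hb n).2 (Nat.lt_pow_succ_log_self hb n)
  calc (b.digits n).sum ≤ (b.digits n).length • (b - 1) :=
        List.sum_le_card_nsmul _ _ fun d hd => Nat.le_sub_one_of_lt (Nat.digits_lt_base hb hd)
    _ ≤ (b - 1) * (Nat.log b n + 1) := by rw [smul_eq_mul, mul_comm]; gcongr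

section Legendre

variable {p : ℕ} [hp : Fact p.Prime]

theorem sub_one_mul_padicValNat_factorial_le (n : ℕ) : (p - 1) * padicValNat p n ! ≤ n := by
  rw [sub_one_mul_padicValNat_factorial]
  exact Nat.sub_le _ _

theorem le_sub_one_mul_padicValNat_factorial_add_log (n : ℕ) :
    n ≤ (p - 1) * (padicValNat p n ! + (Nat.log p n + 1)) := by
  rw [mul_add, sub_one_mul_padicValNat_factorial]
  have := Nat.digits_sum_le_sub_one_mul_log_add_one hp.out.one_lt n
  have := Nat.digit_sum_le p n
  omega

theorem div_sub_one_sub_log_le_padicValNat_factorial (n : ℕ) :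
    (n : ℝ) / (p - 1) - (Nat.log p n + 1) ≤ padicValNat p n ! := by
  have hp1 : (1 : ℝ) < p := mod_cast hp.out.one_lt
  rw [sub_le_iff_le_add, div_le_iff₀ (by linarith)]
  have h : (n : ℝ) ≤ ((p - 1 : ℕ) : ℝ) * (padicValNat p n ! + (Nat.log p n + 1) : ℕ) :=
    mod_cast le_sub_one_mul_padicValNat_factorial_add_log n
  rw [Nat.cast_sub hp.out.one_le] at h
  push_cast at h
  linarith

theorem padicValNat_factorial_div_pow_le (n k : ℕ) :
    (padicValNat p (n / p ^ k)! : ℝ) ≤ n / (p ^ k * (p - 1)) := by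
  have hp1 : (1 : ℝ) < p := mod_cast hp.out.one_lt
  rw [le_div_iff₀ (by positivity)]
  have h : (p - 1) * padicValNat p (n / p ^ k)! * p ^ k ≤ n :=
    calc (p - 1) * padicValNat p (n / p ^ k)! * p ^ k ≤ n / p ^ k * p ^ k := by
          gcongr; exact sub_one_mul_padicValNat_factorial_le _
      _ ≤ n := Nat.div_mul_le_self n _
  have h' : ((p - 1 : ℕ) : ℝ) * padicValNat p (n / p ^ k)! * (p ^ k : ℕ) ≤ n := mod_cast h
  rw [Nat.cast_sub hp.out.one_le] at h'
  push_cast at h'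
  linarith

end Legendre

theorem div_pow_le_nuCeil (p m k : ℕ) : (k : ℝ) / (p : ℝ) ^ (m + 1) ≤ nuCeil p m k := by
  have h := (Rat.cast_le (K := ℝ)).2 (Nat.le_ceil ((k : ℚ) / (p : ℚ) ^ (m + 1)))
  push_cast at h
  exact h

theorem natLog_le_logb_of_le {b n x : ℕ} (h : n ≤ x) : (Nat.log b n : ℝ) ≤ Real.logb b x :=
  (Nat.cast_le.2 (Nat.log_mono_right h)).trans (Real.natLog_le_logb x b)

theorem quotient_coefficient_valuation_estimate_general
    (p : ℕ) (hp : p.Prime) (m l r s : ℕ) :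
    ((p : ℝ) ^ 2 - p - 1) * l / ((p : ℝ) ^ (m + 2) * (p - 1)) - Real.logb p (l + 1) - 2 ≤
      (nuCeil p m l : ℝ) - ((l : ℝ) - s) / (p - 1) +
        (padicValNat p (l.choose r) : ℝ) + (padicValNat p ((r - 1).choose s) : ℝ) +
        (padicValNat p (l - 1 - s).factorial : ℝ) -
        (padicValNat p ((l - 1 - s) / p ^ (m + 2)).factorial : ℝ) := by
  have : Fact p.Prime := ⟨hp⟩
  set n := l - 1 - s
  have hp1 : (1 : ℝ) ≤ p - 1 := by have : (2 : ℝ) ≤ p := mod_cast hp.two_le; linarith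
  have hp0 : (p : ℝ) ≠ 0 := mod_cast hp.ne_zero
  have h_lhs : ((p : ℝ) ^ 2 - p - 1) * l / ((p : ℝ) ^ (m + 2) * (p - 1)) =
      l / (p : ℝ) ^ (m + 1) - l / ((p : ℝ) ^ (m + 2) * (p - 1)) := by
    have : (p : ℝ) - 1 ≠ 0 := by linarith
    field_simp
    ring
  have h_log : (Nat.log p n : ℝ) ≤ Real.logb p (l + 1) := by
    exact_mod_cast natLog_le_logb_of_le (b := p) (by omega : n ≤ l + 1)
  have h_shift : ((l : ℝ) - s) / (p - 1) ≤ n / (p - 1) + 1 := by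
    have hn : (l : ℝ) - s ≤ n + 1 := by
      rw [sub_le_iff_le_add]
      exact_mod_cast (by omega : l ≤ n + 1 + s)
    calc ((l : ℝ) - s) / (p - 1) ≤ (n + 1) / (p - 1) := by gcongr
      _ = n / (p - 1) + 1 / (p - 1) := add_div _ _ _
      _ ≤ n / (p - 1) + 1 := by gcongr; exact div_le_one_of_le₀ hp1 (by linarith)
  have h_quot : (n : ℝ) / ((p : ℝ) ^ (m + 2) * (p - 1)) ≤ l / ((p : ℝ) ^ (m + 2) * (p - 1)) := by
    gcongr
    exact_mod_cast (by omega : n ≤ l)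
  linarith [div_pow_le_nuCeil p m l, div_sub_one_sub_log_le_padicValNat_factorial (p := p) n,
    padicValNat_factorial_div_pow_le (p := p) n (m + 2),
    (padicValNat p (l.choose r)).cast_nonneg (α := ℝ),
    (padicValNat p ((r - 1).choose s)).cast_nonneg (α := ℝ)]

/-- Estimate for the valuation of the coefficients
`c_l(r,s) = (−1)^{r−1+s}·(p^{ν_m(l)}/π^{l−s})·C(l,r)·C(r−1,s)·(l−1−s)!/(q_{l−1−s}^{(m+2)})!`
in the division lemma:
`⌈l/p^{m+1}⌉ − (l−s)/(p−1) + v_p(C(l,r)) + v_p(C(r−1,s)) + v_p((l−1−s)!)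
  − v_p(⌊(l−1−s)/p^{m+2}⌋!) ≥ ((p²−p−1)·l)/(p^{m+2}(p−1)) − log_p(l+1) − 2`. -/
theorem quotient_coefficient_valuation_estimate
    (p : ℕ) (hp : p.Prime) (m l r s : ℕ)
    (hl : 1 ≤ l) (hr1 : 1 ≤ r) (hrl : r ≤ l) (hs : s ≤ r - 1) :
    ((p : ℝ) ^ 2 - p - 1) * l / ((p : ℝ) ^ (m + 2) * (p - 1)) - Real.logb p (l + 1) - 2 ≤
      (nuCeil p m l : ℝ) - ((l : ℝ) - s) / (p - 1) +
        (padicValNat p (l.choose r) : ℝ) + (padicValNat p ((r - 1).choose s) : ℝ) +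
        (padicValNat p (l - 1 - s).factorial : ℝ) -
        (padicValNat p ((l - 1 - s) / p ^ (m + 2)).factorial : ℝ) :=
  quotient_coefficient_valuation_estimate_general p hp m l r s
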